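/- If T is a strong Frobenius monad on a monoidal dagger category C, then the counit of the monoids/strong-monads adjunction, with components ε_A = T(ρ_A) ∘ st_{A,I} : A ⊗ T(I) → T(A), is a morphism of comonads from − ⊗ T(I) to T: it preserves the counit, i.e. η_A† ∘ ε_A = ρ_A ∘ (id_A ⊗ η_I†), and preserves the comultiplication, where − ⊗ T(I) carries the comonad structure induced by the comonoid (T(I), m†, η_I†) (m being the monoid multiplication μ_I ∘ T(ρ_{T(I)}) ∘ st_{T(I),I} on T(I)) and T carries the comonad structure (μ†, η†). -/

import Mathlib

open CategoryTheory Category MonoidalCategory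

universe v u

/-- A dagger structure on a category: a contravariant, identity-on-objects,
involutive operation on morphisms. -/
class DaggerStruct (C : Type u) [Category.{v} C] where
  dag : ∀ {X Y : C}, (X ⟶ Y) → (Y ⟶ X)
  dag_dag : ∀ {X Y : C} (f : X ⟶ Y), dag (dag f) = f
  dag_id : ∀ X : C, dag (𝟙 X) = 𝟙 X
  dag_comp : ∀ {X Y Z : C} (f : X ⟶ Y) (g : Y ⟶ Z), dag (f ≫ g) = dag g ≫ dag f

notation:max f "†" => DaggerStruct.dag f

/-- A monoidal dagger category: the dagger cooperates with the monoidal structure. -/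
class MonoidalDagger (C : Type u) [Category.{v} C] [MonoidalCategory C] extends
    DaggerStruct C where
  dag_tensor : ∀ {X₁ Y₁ X₂ Y₂ : C} (f : X₁ ⟶ Y₁) (g : X₂ ⟶ Y₂), (f ⊗ₘ g)† = f† ⊗ₘ g†
  assoc_unitary : ∀ X Y Z : C, ((α_ X Y Z).hom)† = (α_ X Y Z).inv
  lunitor_unitary : ∀ X : C, ((λ_ X).hom)† = (λ_ X).inv
  runitor_unitary : ∀ X : C, ((ρ_ X).hom)† = (ρ_ X).inv

/-- A symmetric monoidal dagger category: additionally the symmetries are unitary. -/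
class SymmetricDagger (C : Type u) [Category.{v} C] [MonoidalCategory C]
    [SymmetricCategory C] extends MonoidalDagger C where
  braiding_unitary : ∀ X Y : C, ((β_ X Y).hom)† = (β_ X Y).inv

/-- A monoid object, given by explicit data. -/
structure IsMonoidObj {C : Type u} [Category.{v} C] [MonoidalCategory C] (A : C)
    (m : A ⊗ A ⟶ A) (u : 𝟙_ C ⟶ A) : Prop where
  mul_assoc : (m ⊗ₘ 𝟙 A) ≫ m = (α_ A A A).hom ≫ (𝟙 A ⊗ₘ m) ≫ m
  one_mul : (u ⊗ₘ 𝟙 A) ≫ m = (λ_ A).hom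
  mul_one : (𝟙 A ⊗ₘ u) ≫ m = (ρ_ A).hom

/-- A Frobenius monoid in a monoidal dagger category. -/
structure IsFrobeniusMonoid {C : Type u} [Category.{v} C] [MonoidalCategory C]
    [MonoidalDagger C] (A : C) (m : A ⊗ A ⟶ A) (u : 𝟙_ C ⟶ A) extends
    IsMonoidObj A m u : Prop where
  frobenius : (m† ⊗ₘ 𝟙 A) ≫ (α_ A A A).hom ≫ (𝟙 A ⊗ₘ m) =
    (𝟙 A ⊗ₘ m†) ≫ (α_ A A A).inv ≫ (m ⊗ₘ 𝟙 A)

/-- A Frobenius monad on a dagger category. -/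
structure IsFrobeniusMonad {C : Type u} [Category.{v} C] [DaggerStruct C]
    (T : Monad C) : Prop where
  map_dag : ∀ {X Y : C} (f : X ⟶ Y), T.map (f†) = (T.map f)†
  frobenius : ∀ A : C,
    ((T.μ.app (T.obj A))†) ≫ T.map (T.μ.app A) =
      T.map ((T.μ.app A)†) ≫ T.μ.app (T.obj A)

/-- A strong Frobenius monad on a monoidal dagger category: a Frobenius monad `T` that is
simultaneously a strong monad, with every strength map `st_{X,Y}` unitary. -/
structure IsStrongFrobeniusMonad {C : Type u} [Category.{v} C] [MonoidalCategory C]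
    [MonoidalDagger C] (T : Monad C)
    (st : ∀ X Y : C, X ⊗ T.obj Y ⟶ T.obj (X ⊗ Y)) : Prop where
  map_dag : ∀ {X Y : C} (f : X ⟶ Y), T.map (f†) = (T.map f)†
  frobenius : ∀ A : C,
    ((T.μ.app (T.obj A))†) ≫ T.map (T.μ.app A) =
      T.map ((T.μ.app A)†) ≫ T.μ.app (T.obj A)
  st_natural : ∀ {X X' Y Y' : C} (f : X ⟶ X') (g : Y ⟶ Y'),
    (f ⊗ₘ T.map g) ≫ st X' Y' = st X Y ≫ T.map (f ⊗ₘ g)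
  st_assoc : ∀ X Y Z : C,
    (α_ X Y (T.obj Z)).inv ≫ st (X ⊗ Y) Z =
      (𝟙 X ⊗ₘ st Y Z) ≫ st X (Y ⊗ Z) ≫ T.map (α_ X Y Z).inv
  st_lunit : ∀ A : C, st (𝟙_ C) A ≫ T.map (λ_ A).hom = (λ_ (T.obj A)).hom
  st_mu : ∀ X A : C,
    (𝟙 X ⊗ₘ T.μ.app A) ≫ st X A =
      st X (T.obj A) ≫ T.map (st X A) ≫ T.μ.app (X ⊗ A)
  st_eta : ∀ X A : C, (𝟙 X ⊗ₘ T.η.app A) ≫ st X A = T.η.app (X ⊗ A)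
  st_unitary₁ : ∀ X Y : C, st X Y ≫ ((st X Y)†) = 𝟙 (X ⊗ T.obj Y)
  st_unitary₂ : ∀ X Y : C, ((st X Y)†) ≫ st X Y = 𝟙 (T.obj (X ⊗ Y))

/-- The multiplication `μ_I ∘ T(ρ_{T(I)}) ∘ st_{T(I),I}` on `T(I)` for a strong monad. -/
def tMul {C : Type u} [Category.{v} C] [MonoidalCategory C] (T : Monad C)
    (st : ∀ X Y : C, X ⊗ T.obj Y ⟶ T.obj (X ⊗ Y)) :
    T.obj (𝟙_ C) ⊗ T.obj (𝟙_ C) ⟶ T.obj (𝟙_ C) :=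
  st (T.obj (𝟙_ C)) (𝟙_ C) ≫ T.map (ρ_ (T.obj (𝟙_ C))).hom ≫ T.μ.app (𝟙_ C)

/-- The counit of the monoids/strong-monads adjunction,
`ε_A = T(ρ_A) ∘ st_{A,I} : A ⊗ T(I) ⟶ T(A)`. -/
def adjCounit {C : Type u} [Category.{v} C] [MonoidalCategory C] (T : Monad C)
    (st : ∀ X Y : C, X ⊗ T.obj Y ⟶ T.obj (X ⊗ Y)) (A : C) :
    A ⊗ T.obj (𝟙_ C) ⟶ T.obj A :=
  st A (𝟙_ C) ≫ T.map (ρ_ A).hom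

/-! The counit `ε_A = T(ρ_A) ∘ st_{A,I}` is unitary, as a composite of the unitary strength and
of `T` applied to the unitary `ρ_A`. The strong monad laws alone make `ε` a morphism of monads from
`− ⊗ T(I)` (the monad of the monoid `T(I)`) to `T`. Taking daggers of the two monad-morphism
equations and cancelling `ε` against `ε† = ε⁻¹` gives the two comonad-morphism equations. -/

section Dagger

variable {C : Type u} [Category.{v} C] [DaggerStruct C]

def IsUnitary {X Y : C} (f : X ⟶ Y) : Prop :=
  f ≫ f† = 𝟙 X ∧ f† ≫ f = 𝟙 Y

theorem IsUnitary.comp {X Y Z : C} {f : X ⟶ Y} {g : Y ⟶ Z} (hf : IsUnitary f)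
    (hg : IsUnitary g) : IsUnitary (f ≫ g) := by
  constructor <;> simp only [DaggerStruct.dag_comp, assoc]
  · rw [reassoc_of% hg.1, hf.1]
  · rw [reassoc_of% hf.2, hg.2]

theorem IsUnitary.map {D : Type*} [Category D] [DaggerStruct D] {F : C ⥤ D}
    (hF : ∀ {X Y : C} (f : X ⟶ Y), F.map (f†) = (F.map f)†) {X Y : C} {f : X ⟶ Y}
    (hf : IsUnitary f) : IsUnitary (F.map f) := by
  constructor <;> rw [← hF, ← F.map_comp, ← F.map_id]
  · rw [hf.1]
  · rw [hf.2]

theorem comp_dag_eq_of_comp_eq {W X Y Z : C} {a : W ⟶ X} {b : X ⟶ Z} {c : W ⟶ Y} {d : Y ⟶ Z}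
    (h : a ≫ b = c ≫ d) (ha : IsUnitary a) (hd : IsUnitary d) : d ≫ b† = c† ≫ a := by
  have h' : b† ≫ a† = d† ≫ c† := by rw [← DaggerStruct.dag_comp, h, DaggerStruct.dag_comp]
  calc d ≫ b† = d ≫ (b† ≫ a†) ≫ a := by rw [assoc, ha.2, comp_id]
    _ = c† ≫ a := by rw [h', assoc, reassoc_of% hd.1]

end Dagger

section MonoidalDagger

variable {C : Type u} [Category.{v} C] [MonoidalCategory C] [MonoidalDagger C]

theorem dag_whiskerLeft (X : C) {Y Z : C} (f : Y ⟶ Z) : (X ◁ f)† = X ◁ f† := by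
  rw [← id_tensorHom, ← id_tensorHom, MonoidalDagger.dag_tensor, DaggerStruct.dag_id]

theorem dag_whiskerRight {X Y : C} (f : X ⟶ Y) (Z : C) : (f ▷ Z)† = f† ▷ Z := by
  rw [← tensorHom_id, ← tensorHom_id, MonoidalDagger.dag_tensor, DaggerStruct.dag_id]

theorem IsUnitary.whiskerRight {X Y : C} {f : X ⟶ Y} (hf : IsUnitary f) (Z : C) :
    IsUnitary (f ▷ Z) := by
  constructor <;> rw [dag_whiskerRight, ← comp_whiskerRight, ← id_whiskerRight]
  · rw [hf.1]
  · rw [hf.2]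

theorem isUnitary_rightUnitor (X : C) : IsUnitary (ρ_ X).hom := by
  constructor <;> simp [MonoidalDagger.runitor_unitary]

end MonoidalDagger

structure IsStrongMonad {C : Type u} [Category.{v} C] [MonoidalCategory C] (T : Monad C)
    (st : ∀ X Y : C, X ⊗ T.obj Y ⟶ T.obj (X ⊗ Y)) : Prop where
  st_natural : ∀ {X X' Y Y' : C} (f : X ⟶ X') (g : Y ⟶ Y'),
    (f ⊗ₘ T.map g) ≫ st X' Y' = st X Y ≫ T.map (f ⊗ₘ g)
  st_assoc : ∀ X Y Z : C,
    (α_ X Y (T.obj Z)).inv ≫ st (X ⊗ Y) Z =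
      (𝟙 X ⊗ₘ st Y Z) ≫ st X (Y ⊗ Z) ≫ T.map (α_ X Y Z).inv
  st_lunit : ∀ A : C, st (𝟙_ C) A ≫ T.map (λ_ A).hom = (λ_ (T.obj A)).hom
  st_mu : ∀ X A : C,
    (𝟙 X ⊗ₘ T.μ.app A) ≫ st X A =
      st X (T.obj A) ≫ T.map (st X A) ≫ T.μ.app (X ⊗ A)
  st_eta : ∀ X A : C, (𝟙 X ⊗ₘ T.η.app A) ≫ st X A = T.η.app (X ⊗ A)

namespace IsStrongMonad

variable {C : Type u} [Category.{v} C] [MonoidalCategory C] {T : Monad C}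
  {st : ∀ X Y : C, X ⊗ T.obj Y ⟶ T.obj (X ⊗ Y)}

theorem st_whiskerRight (hT : IsStrongMonad T st) {X X' : C} (f : X ⟶ X') (Y : C) :
    (f ▷ T.obj Y) ≫ st X' Y = st X Y ≫ T.map (f ▷ Y) := by
  simpa [tensorHom_id] using hT.st_natural f (𝟙 Y)

theorem st_whiskerLeft (hT : IsStrongMonad T st) (X : C) {Y Y' : C} (g : Y ⟶ Y') :
    (X ◁ T.map g) ≫ st X Y' = st X Y ≫ T.map (X ◁ g) := by
  simpa [id_tensorHom] using hT.st_natural (𝟙 X) g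

theorem adjCounit_naturality (hT : IsStrongMonad T st) {A B : C} (f : A ⟶ B) :
    (f ▷ T.obj (𝟙_ C)) ≫ adjCounit T st B = adjCounit T st A ≫ T.map f := by
  simp only [adjCounit, reassoc_of% hT.st_whiskerRight, assoc, ← T.map_comp,
    rightUnitor_naturality]

theorem whiskerLeft_adjCounit_comp_st (hT : IsStrongMonad T st) (A B : C) :
    (A ◁ adjCounit T st B) ≫ st A B = (α_ A B _).inv ≫ adjCounit T st (A ⊗ B) := by
  have hassoc := hT.st_assoc A B (𝟙_ C)
  rw [id_tensorHom] at hassoc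
  simp only [adjCounit, whiskerLeft_comp, assoc, hT.st_whiskerLeft, reassoc_of% hassoc,
    ← T.map_comp, rightUnitor_tensor_hom]
  simp only [whiskerLeft_rightUnitor, Functor.map_comp, Iso.hom_inv_id_assoc]

theorem whiskerLeft_mu_comp_adjCounit (hT : IsStrongMonad T st) (A : C) :
    (A ◁ T.μ.app (𝟙_ C)) ≫ adjCounit T st A =
      st A (T.obj (𝟙_ C)) ≫ T.map (adjCounit T st A) ≫ T.μ.app A := by
  have hmu := hT.st_mu A (𝟙_ C)
  rw [id_tensorHom] at hmu
  have hnat : T.map (T.map (ρ_ A).hom) ≫ T.μ.app A = T.μ.app _ ≫ T.map (ρ_ A).hom :=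
    T.μ.naturality _
  simp only [adjCounit, reassoc_of% hmu, T.map_comp, assoc, hnat]

theorem adjCounit_unit (hT : IsStrongMonad T st) (A : C) :
    (ρ_ A).hom ≫ T.η.app A = (A ◁ T.η.app (𝟙_ C)) ≫ adjCounit T st A := by
  have heta := hT.st_eta A (𝟙_ C)
  rw [id_tensorHom] at heta
  rw [adjCounit, reassoc_of% heta]
  simpa using T.η.naturality (ρ_ A).hom

theorem adjCounit_mul (hT : IsStrongMonad T st) (A : C) :
    ((adjCounit T st A ▷ T.obj (𝟙_ C)) ≫ adjCounit T st (T.obj A)) ≫ T.μ.app A =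
      ((α_ A (T.obj (𝟙_ C)) (T.obj (𝟙_ C))).hom ≫ (A ◁ tMul T st)) ≫ adjCounit T st A := by
  have htMul : tMul T st = adjCounit T st (T.obj (𝟙_ C)) ≫ T.μ.app (𝟙_ C) := by
    simp [tMul, adjCounit]
  rw [adjCounit_naturality hT, htMul, whiskerLeft_comp, assoc, assoc, assoc,
    whiskerLeft_mu_comp_adjCounit hT, reassoc_of% whiskerLeft_adjCounit_comp_st hT,
    Iso.hom_inv_id_assoc]

end IsStrongMonad

namespace IsStrongFrobeniusMonad

variable {C : Type u} [Category.{v} C] [MonoidalCategory C] [MonoidalDagger C] {T : Monad C}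
  {st : ∀ X Y : C, X ⊗ T.obj Y ⟶ T.obj (X ⊗ Y)}

theorem toIsStrongMonad (hT : IsStrongFrobeniusMonad T st) : IsStrongMonad T st :=
  ⟨hT.st_natural, hT.st_assoc, hT.st_lunit, hT.st_mu, hT.st_eta⟩

theorem isUnitary_adjCounit (hT : IsStrongFrobeniusMonad T st) (A : C) :
    IsUnitary (adjCounit T st A) :=
  IsUnitary.comp ⟨hT.st_unitary₁ A _, hT.st_unitary₂ A _⟩
    ((isUnitary_rightUnitor A).map (F := T.toFunctor) hT.map_dag)

end IsStrongFrobeniusMonad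

/-- STATEMENT 18: for a strong Frobenius monad `T`, the counit `ε_A = T(ρ_A) ∘ st_{A,I}`
is a morphism of comonads from `− ⊗ T(I)` (with the comonad structure induced by the
comonoid `(T(I), m†, η_I†)`) to `T` (with comonad structure `(μ†, η†)`): it preserves
the counit and the comultiplication. -/
theorem adj_counit_comonad_morphism {C : Type u} [Category.{v} C] [MonoidalCategory C]
    [MonoidalDagger C] (T : Monad C) (st : ∀ X Y : C, X ⊗ T.obj Y ⟶ T.obj (X ⊗ Y))
    (hT : IsStrongFrobeniusMonad T st) :
    (∀ A : C,
      adjCounit T st A ≫ ((T.η.app A)†) =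
        (𝟙 A ⊗ₘ ((T.η.app (𝟙_ C))†)) ≫ (ρ_ A).hom) ∧
    (∀ A : C,
      adjCounit T st A ≫ ((T.μ.app A)†) =
        (𝟙 A ⊗ₘ ((tMul T st)†)) ≫ (α_ A (T.obj (𝟙_ C)) (T.obj (𝟙_ C))).inv ≫
          (adjCounit T st A ⊗ₘ 𝟙 (T.obj (𝟙_ C))) ≫ adjCounit T st (T.obj A)) := by
  have hε := hT.isUnitary_adjCounit
  refine ⟨fun A => ?_, fun A => ?_⟩
  · rw [id_tensorHom, ← dag_whiskerLeft]
    exact comp_dag_eq_of_comp_eq (hT.toIsStrongMonad.adjCounit_unit A)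
      (isUnitary_rightUnitor A) (hε A)
  · have hεε : IsUnitary ((adjCounit T st A ▷ _) ≫ adjCounit T st (T.obj A)) :=
      ((hε A).whiskerRight _).comp (hε _)
    rw [comp_dag_eq_of_comp_eq (hT.toIsStrongMonad.adjCounit_mul A) hεε (hε A),
      DaggerStruct.dag_comp, MonoidalDagger.assoc_unitary, dag_whiskerLeft, id_tensorHom,
      tensorHom_id, assoc]
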